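/- arXiv:1707.07507 — 2 statements merged into one kernel-verified Lean document; each statement's English description precedes it below -/
import Mathlib

section
/- Let D be a semilocal Prüfer domain, let Δ ⊆ SkOver(D) be such that SStar_Δ(D) ≠ ∅, and let γ_Δ : SStar_Δ(D) → ∏_{A∈Δ} FStar(A) be the map sending ⋆ to the family (⋆|_{Frac(A)})_{A∈Δ} of its restrictions. Then γ_Δ is injective. -/
/- Common background: Prüfer domains, semistar and (fractional) star operations,
standard decomposition, skeleton, supports, `hiSpec`, the rings `Z(P)`,
and the invariants `ω` and `ε`, following Spirito,
"Semistar operations on semilocal Prüfer domains". -/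

set_option linter.unusedSectionVars false
set_option maxHeartbeats 1000000

open Pointwise

noncomputable section

namespace Paper

variable (D : Type*) [CommRing D] [IsDomain D]
variable (K : Type*) [Field K] [Algebra D K] [IsFractionRing D K]

/-- The localization of `D` at a prime ideal `P`, viewed as an overring of `D`
inside its quotient field `K`. -/
def locAt (P : Ideal D) (hP : P.IsPrime) : Subalgebra D K :=
  Localization.subalgebra K (@Ideal.primeCompl D _ P hP)
    (fun _ hx => mem_nonZeroDivisors_of_ne_zero fun h => hx (h ▸ P.zero_mem))

/-- A Prüfer domain: every localization at a prime ideal is a valuation domain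
(any two elements are comparable w.r.t. divisibility). -/
def IsPrufer : Prop :=
  ∀ (P : Ideal D) (hP : P.IsPrime), ∀ x y : locAt D K P hP, ∃ z, x * z = y ∨ y * z = x

/-- A semilocal ring: finitely many maximal ideals. -/
def IsSemilocal : Prop := {I : Ideal D | I.IsMaximal}.Finite

/-- Two ideals are dependent if some nonzero prime ideal is contained in both. -/
def Dependent (M N : Ideal D) : Prop :=
  ∃ P : Ideal D, P.IsPrime ∧ P ≠ ⊥ ∧ P ≤ M ∧ P ≤ N

/-- The member of the standard decomposition corresponding to the dependence class
of the maximal ideal `M`: the intersection of the localizations of `D` at the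
maximal ideals dependent on `M`. -/
def TOf (M : Ideal D) : Subalgebra D K :=
  sInf {A | ∃ (N : Ideal D) (hN : N.IsMaximal), Dependent D M N ∧ A = locAt D K N hN.isPrime}

/-- The standard decomposition of `D`. -/
def stdDecomp : Set (Subalgebra D K) :=
  {T | ∃ M : Ideal D, M.IsMaximal ∧ T = TOf D K M}

/-- The skeleton of `Over(D)`: all intersections of subsets of the standard
decomposition (including the empty intersection `K` and the total one `D`). -/
def SkOver : Set (Subalgebra D K) :=
  {A | ∃ S ⊆ stdDecomp D K, A = sInf S}

/-- `I` is a fractional ideal of the overring `A` of `D`: it is an `A`-submodule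
of `K` and `dI ⊆ A` for some nonzero `d ∈ K`. -/
def IsFracOf (A : Subalgebra D K) (I : Submodule D K) : Prop :=
  (∀ a ∈ A, ∀ x ∈ I, a * x ∈ I) ∧ ∃ d : K, d ≠ 0 ∧ ∀ x ∈ I, d * x ∈ A

end Paper

namespace Paper

/-- A semistar operation on a domain `R` with quotient field `K`: an extensive,
order-preserving, idempotent self-map of the set of `R`-submodules of `K` such
that `(xI)^⋆ = x·I^⋆` for every nonzero `x ∈ K`. -/
structure Semistar (R : Type*) [CommRing R] (K : Type*) [Field K] [Algebra R K] where
  toFun : Submodule R K → Submodule R K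
  le_star' : ∀ I, I ≤ toFun I
  mono' : ∀ ⦃I J⦄, I ≤ J → toFun I ≤ toFun J
  idem' : ∀ I, toFun (toFun I) = toFun I
  smul' : ∀ (x : K), x ≠ 0 → ∀ I,
    toFun (Submodule.span R {x} * I) = Submodule.span R {x} * toFun I

namespace Semistar

variable {R : Type*} [CommRing R] {K : Type*} [Field K] [Algebra R K]

theorem ext' {s t : Semistar R K} (h : s.toFun = t.toFun) : s = t := by
  cases s; cases t; cases h; rfl

instance : PartialOrder (Semistar R K) where
  le s t := ∀ I, s.toFun I ≤ t.toFun I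
  le_refl _ _ := le_rfl
  le_trans _ _ _ hab hbc I := (hab I).trans (hbc I)
  le_antisymm _ _ h h' := ext' (funext fun I => le_antisymm (h I) (h' I))

end Semistar

/-- The identity semistar operation `d`. -/
def dOp (R : Type*) [CommRing R] (K : Type*) [Field K] [Algebra R K] : Semistar R K where
  toFun I := I
  le_star' _ := le_rfl
  mono' _ _ h := h
  idem' _ := rfl
  smul' _ _ _ := rfl

end Paper

namespace Paper

variable (D : Type*) [CommRing D] [IsDomain D]
variable (K : Type*) [Field K] [Algebra D K] [IsFractionRing D K]

/-- A fractional star operation on an overring `A` of `D` (inside `K`): a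
semistar-like closure operation defined on the fractional ideals of `A`.
In particular `FracStar D K ⊥` is the set of fractional star operations on `D`. -/
structure FracStar (A : Subalgebra D K) where
  toFun : {I : Submodule D K // IsFracOf D K A I} → {I : Submodule D K // IsFracOf D K A I}
  le_star' : ∀ I, I.1 ≤ (toFun I).1
  mono' : ∀ I J, I.1 ≤ J.1 → (toFun I).1 ≤ (toFun J).1
  idem' : ∀ I, toFun (toFun I) = toFun I
  smul' : ∀ (x : K), x ≠ 0 → ∀ I J, J.1 = Submodule.span D {x} * I.1 →
    (toFun J).1 = Submodule.span D {x} * (toFun I).1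

namespace FracStar

variable {D K} {A : Subalgebra D K}

theorem ext' {s t : FracStar D K A} (h : s.toFun = t.toFun) : s = t := by
  cases s; cases t; cases h; rfl

instance : PartialOrder (FracStar D K A) where
  le s t := ∀ I, (s.toFun I).1 ≤ (t.toFun I).1
  le_refl _ _ := le_rfl
  le_trans _ _ _ hab hbc I := (hab I).trans (hbc I)
  le_antisymm _ _ h h' := ext' (funext fun I => Subtype.ext (le_antisymm (h I) (h' I)))

end FracStar

/-- A fractional star operation on the overring `A` is a *star operation* if it
closes `A` itself. -/
def FracStar.IsStarOp {A : Subalgebra D K} (f : FracStar D K A) : Prop :=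
  ∀ h : IsFracOf D K A (Subalgebra.toSubmodule A),
    (f.toFun ⟨Subalgebra.toSubmodule A, h⟩).1 = Subalgebra.toSubmodule A

/-- The support of a semistar operation on `D`: the elements `A` of the skeleton
such that `A^⋆` is a fractional ideal of `A`. -/
def supp (s : Semistar D K) : Set (Subalgebra D K) :=
  {A | A ∈ SkOver D K ∧ IsFracOf D K A (s.toFun (Subalgebra.toSubmodule A))}

/-- The image of an ideal of `D` inside `K`. -/
def idealToK (P : Ideal D) : Submodule D K := Submodule.map (Algebra.linearMap D K) P

end Paper

namespace Paper

/-- An abstract fractional star operation on a commutative ring `A`, acting on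
the fractional ideals of `A` inside its fraction ring. -/
structure AFracStar (A : Type*) [CommRing A] where
  toFun : FractionalIdeal (nonZeroDivisors A) (FractionRing A) →
    FractionalIdeal (nonZeroDivisors A) (FractionRing A)
  le_star' : ∀ I, I ≤ toFun I
  mono' : ∀ ⦃I J⦄, I ≤ J → toFun I ≤ toFun J
  idem' : ∀ I, toFun (toFun I) = toFun I
  smul' : ∀ (x : FractionRing A), x ≠ 0 → ∀ I,
    toFun (FractionalIdeal.spanSingleton (nonZeroDivisors A) x * I) =
      FractionalIdeal.spanSingleton (nonZeroDivisors A) x * toFun I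

namespace AFracStar

variable {A : Type*} [CommRing A]

theorem ext' {s t : AFracStar A} (h : s.toFun = t.toFun) : s = t := by
  cases s; cases t; cases h; rfl

instance : PartialOrder (AFracStar A) where
  le s t := ∀ I, s.toFun I ≤ t.toFun I
  le_refl _ _ := le_rfl
  le_trans _ _ _ hab hbc I := (hab I).trans (hbc I)
  le_antisymm _ _ h h' := ext' (funext fun I => le_antisymm (h I) (h' I))

end AFracStar

/-- Abstract star operations on `A`: fractional star operations closing `A`. -/
def AStar (A : Type*) [CommRing A] : Type _ := {s : AFracStar A // s.toFun 1 = 1}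

instance (A : Type*) [CommRing A] : PartialOrder (AStar A) :=
  inferInstanceAs (PartialOrder {s : AFracStar A // s.toFun 1 = 1})

end Paper

namespace Paper

variable (D : Type*) [CommRing D] [IsDomain D]

/-- `P` is a branching point of `Spec(D)`: the infimum (among the primes) of a
family of pairwise incomparable primes not containing `P`. -/
def IsBranchPoint (P : Ideal D) : Prop :=
  ∃ S : Set (Ideal D), (∀ Q ∈ S, Q.IsPrime) ∧
    (S.Pairwise fun Q₁ Q₂ => ¬Q₁ ≤ Q₂ ∧ ¬Q₂ ≤ Q₁) ∧ P ∉ S ∧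
    (∀ Q ∈ S, P ≤ Q) ∧ ∀ P' : Ideal D, P'.IsPrime → (∀ Q ∈ S, P' ≤ Q) → P' ≤ P

/-- The homeomorphically irreducible tree underlying `Spec(D)`: the zero ideal,
the maximal ideals and the branching points, ordered by inclusion. -/
def hiSpec : Set (Ideal D) :=
  {P | P.IsPrime ∧ (P = ⊥ ∨ P.IsMaximal ∨ IsBranchPoint D P)}

/-- `Q` is the element of `hiSpec D` directly below `P`. -/
def DirectlyBelow (Q P : Ideal D) : Prop :=
  Q ∈ hiSpec D ∧ P ∈ hiSpec D ∧ Q < P ∧ ∀ R ∈ hiSpec D, Q < R → ¬R < P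

/-- The localization of `D` at the prime ideal `P`, as an abstract ring. -/
abbrev locRing (P : Ideal D) (hP : P.IsPrime) : Type _ :=
  Localization (@Ideal.primeCompl D _ P hP)

/-- The valuation ring `Z(P) = D_P / Q·D_P`. -/
abbrev Zring (P Q : Ideal D) (hP : P.IsPrime) : Type _ :=
  locRing D P hP ⧸ Ideal.map (algebraMap D (locRing D P hP)) Q

/-- `ω(P) = |FStar(Z(P))|`, where `Q` is the element of `hiSpec D` directly
below `P`. -/
def omegaAt (P Q : Ideal D) (hP : P.IsPrime) : ℕ :=
  Nat.card (AFracStar (Zring D P Q hP))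

open Classical in
/-- `ε(P) = |Star(D_P)| ∈ {1,2}` for a (nonzero) prime `P`. -/
def epsilonOf (A : Ideal D) : ℕ :=
  if h : A.IsPrime then Nat.card (AStar (locRing D A h)) else 0

end Paper

namespace Paper

theorem mem_hiSpec_prime {D : Type*} [CommRing D] [IsDomain D] {P : Ideal D}
    (h : P ∈ hiSpec D) : P.IsPrime := h.1

theorem maximal_mem_hiSpec {D : Type*} [CommRing D] [IsDomain D] {M : Ideal D}
    (h : M.IsMaximal) : M ∈ hiSpec D := ⟨h.isPrime, Or.inr (Or.inl h)⟩

end Paper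

/-! For a `⋆`-closed submodule `J ≠ 0` of `K`, the maximal ideals `M` with `J·D_M ≠ K` form a
finite set closed under dependence: over a Prüfer domain a proper `D_M`-submodule of `K` has a
denominator, and dependent maximal ideals `M, N` lie over a common `D_P ≠ K`. Hence `J` is a
fractional ideal of the corresponding intersection `A` of members of the standard decomposition,
and since `jA ⊆ J` for `0 ≠ j ∈ J`, also `A^⋆ ⊆ j⁻¹J` is fractional, so `A ∈ supp(⋆)`.
Consequently, if `⋆₁, ⋆₂` share their support and agree on fractional ideals of its members,
then `I^{⋆₂} ⊆ (I^{⋆₁})^{⋆₂} = (I^{⋆₁})^{⋆₁} = I^{⋆₁}`, and symmetrically. -/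

namespace Paper

theorem Semistar.mul_mem_toFun {R : Type*} [CommRing R] {K : Type*} [Field K] [Algebra R K]
    (s : Semistar R K) {a : K} {I J : Submodule R K} (h : ∀ x ∈ I, a * x ∈ J) {x : K}
    (hx : x ∈ s.toFun I) : a * x ∈ s.toFun J := by
  rcases eq_or_ne a 0 with rfl | ha
  · rw [zero_mul]
    exact zero_mem _
  have hle : Submodule.span R {a} * I ≤ J := fun y hy => by
    obtain ⟨z, hz, rfl⟩ := Submodule.mem_span_singleton_mul.1 hy
    exact h z hz
  have hstar := s.mono' hle
  rw [s.smul' a ha] at hstar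
  exact hstar (Submodule.mem_span_singleton_mul.2 ⟨x, hx, rfl⟩)

theorem exists_smul_mem_of_finite {R S : Type*} [CommRing R] [IsDomain R] [Semiring S]
    [Algebra R S] {ι : Type*} [Finite ι] {B : ι → Subalgebra R S} {J : Set S}
    (h : ∀ i, ∃ d : R, d ≠ 0 ∧ ∀ x ∈ J, d • x ∈ B i) :
    ∃ d : R, d ≠ 0 ∧ ∀ i, ∀ x ∈ J, d • x ∈ B i := by
  classical
  choose d hd0 hd using h
  cases nonempty_fintype ι
  refine ⟨∏ i, d i, Finset.prod_ne_zero_iff.2 fun i _ => hd0 i, fun i x hx => ?_⟩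
  rw [← Finset.mul_prod_erase _ _ (Finset.mem_univ i), mul_comm, mul_smul]
  exact (B i).smul_mem (hd i x hx) _

section

variable {D : Type*} [CommRing D] [IsDomain D]
variable {K : Type*} [Field K] [Algebra D K] [IsFractionRing D K]

section Localization

theorem mem_locAt {P : Ideal D} {hP : P.IsPrime} {x : K} :
    x ∈ locAt D K P hP ↔ ∃ a t : D, t ∉ P ∧ x = algebraMap D K a / algebraMap D K t := by
  rw [locAt, Localization.subalgebra, ← SetLike.mem_coe, Subalgebra.coe_copy]
  constructor
  · rintro ⟨a, t, ht, rfl⟩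
    exact ⟨a, t, ht, by rw [IsFractionRing.mk'_eq_div]⟩
  · rintro ⟨a, t, ht, rfl⟩
    exact ⟨a, t, ht, by rw [IsFractionRing.mk'_eq_div]⟩

theorem algebraMap_ne_zero {a : D} (ha : a ≠ 0) : algebraMap D K a ≠ 0 :=
  (map_ne_zero_iff _ (IsFractionRing.injective D K)).2 ha

theorem locAt_anti {P Q : Ideal D} (hP : P.IsPrime) (hQ : Q.IsPrime) (h : P ≤ Q) :
    locAt D K Q hQ ≤ locAt D K P hP := fun x hx => by
  obtain ⟨a, t, ht, rfl⟩ := mem_locAt.1 hx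
  exact mem_locAt.2 ⟨a, t, fun htP => ht (h htP), rfl⟩

theorem locAt_bot (h : (⊥ : Ideal D).IsPrime) : locAt D K ⊥ h = ⊤ := by
  refine eq_top_iff.2 fun x _ => ?_
  obtain ⟨a, b, hb, rfl⟩ := IsFractionRing.div_surjective (A := D) x
  exact mem_locAt.2 ⟨a, b, by simpa using nonZeroDivisors.ne_zero hb, rfl⟩

theorem locAt_ne_top {P : Ideal D} (hP : P.IsPrime) (hP0 : P ≠ ⊥) : locAt D K P hP ≠ ⊤ := by
  intro htop
  obtain ⟨p, hpP, hp0⟩ := Submodule.ne_bot_iff P |>.1 hP0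
  have hinv : (algebraMap D K p)⁻¹ ∈ locAt D K P hP := htop ▸ Algebra.mem_top
  obtain ⟨a, t, ht, heq⟩ := mem_locAt.1 hinv
  have hpK := algebraMap_ne_zero (K := K) hp0
  have htK := algebraMap_ne_zero (K := K) fun h : t = 0 => ht (h ▸ P.zero_mem)
  have hta : algebraMap D K t = algebraMap D K (a * p) := by
    rw [map_mul]
    field_simp at heq
    linear_combination heq
  exact ht (IsFractionRing.injective D K hta ▸ P.mul_mem_left a hpP)

theorem mem_or_inv_mem_locAt (hPruf : IsPrufer D K) {P : Ideal D} (hP : P.IsPrime) (x : K) :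
    x ∈ locAt D K P hP ∨ x⁻¹ ∈ locAt D K P hP := by
  obtain ⟨a, b, hb, rfl⟩ := IsFractionRing.div_surjective (A := D) x
  have hbK := algebraMap_ne_zero (K := K) (nonZeroDivisors.ne_zero hb)
  obtain ⟨z, hz | hz⟩ := hPruf P hP
    ⟨algebraMap D K a, Subalgebra.algebraMap_mem _ a⟩
    ⟨algebraMap D K b, Subalgebra.algebraMap_mem _ b⟩
  · replace hz : algebraMap D K a * z = algebraMap D K b := congrArg Subtype.val hz
    have haK : algebraMap D K a ≠ 0 := fun h => hbK (by rw [← hz, h, zero_mul])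
    right
    rw [inv_div, ← hz, mul_div_cancel_left₀ _ haK]
    exact z.2
  · replace hz : algebraMap D K b * z = algebraMap D K a := congrArg Subtype.val hz
    left
    rw [← hz, mul_div_cancel_left₀ _ hbK]
    exact z.2

theorem exists_smul_mem_locAt_of_ne_top (hPruf : IsPrufer D K) {P : Ideal D} (hP : P.IsPrime)
    {W : Submodule D K} (hW : ∀ v ∈ locAt D K P hP, ∀ x ∈ W, v * x ∈ W) (hWtop : W ≠ ⊤) :
    ∃ d : D, d ≠ 0 ∧ ∀ x ∈ W, d • x ∈ locAt D K P hP := by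
  obtain ⟨y, hy⟩ : ∃ y, y ∉ W := by
    by_contra! h
    exact hWtop (Submodule.eq_top_iff'.2 h)
  have hy0 : y ≠ 0 := fun h => hy (h ▸ W.zero_mem)
  obtain ⟨a, b, hb, hab⟩ := IsFractionRing.div_surjective (A := D) y
  refine ⟨b, nonZeroDivisors.ne_zero hb, fun x hx => ?_⟩
  rcases eq_or_ne x 0 with rfl | hx0
  · rw [smul_zero]
    exact zero_mem _
  -- `x⁻¹ y ∈ D_P` would force `y = (x⁻¹ y) x ∈ W`, so the valuation property gives `y⁻¹ x ∈ D_P`.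
  have hyx : y⁻¹ * x ∈ locAt D K P hP := by
    rcases mem_or_inv_mem_locAt hPruf hP (x⁻¹ * y) with hmem | hmem
    · have hyW := hW _ hmem x hx
      rw [mul_comm x⁻¹, mul_assoc, inv_mul_cancel₀ hx0, mul_one] at hyW
      exact absurd hyW hy
    · rwa [mul_inv_rev, inv_inv] at hmem
  have hbx : b • x = algebraMap D K a * (y⁻¹ * x) := by
    have hbK := algebraMap_ne_zero (K := K) (nonZeroDivisors.ne_zero hb)
    have haK : algebraMap D K a ≠ 0 := fun h => hy0 (by rw [← hab, h, zero_div])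
    rw [Algebra.smul_def, ← hab]
    field_simp
  rw [hbx]
  exact mul_mem (Subalgebra.algebraMap_mem _ a) hyx

theorem exists_smul_mem_of_mem_mul_locAt {M : Ideal D} (hM : M.IsPrime) {J : Submodule D K}
    {x : K} (hx : x ∈ J * Subalgebra.toSubmodule (locAt D K M hM)) :
    ∃ t : D, t ∉ M ∧ t • x ∈ J := by
  refine Submodule.mul_induction_on hx (fun j hj v hv => ?_) ?_
  · obtain ⟨a, t, ht, rfl⟩ := mem_locAt.1 hv
    have htK := algebraMap_ne_zero (K := K) fun h : t = 0 => ht (h ▸ M.zero_mem)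
    refine ⟨t, ht, ?_⟩
    have hcancel : t • (j * (algebraMap D K a / algebraMap D K t)) = a • j := by
      rw [Algebra.smul_def, Algebra.smul_def]
      field_simp
    rw [hcancel]
    exact J.smul_mem a hj
  · rintro x y ⟨t, ht, htx⟩ ⟨u, hu, huy⟩
    refine ⟨t * u, fun h => (hM.mem_or_mem h).elim ht hu, ?_⟩
    rw [smul_add, mul_comm, mul_smul, mul_comm, mul_smul]
    exact J.add_mem (J.smul_mem u htx) (J.smul_mem t huy)

theorem mem_of_forall_mem_mul_locAt {J : Submodule D K} {x : K}
    (hx : ∀ (M : Ideal D) (hM : M.IsMaximal),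
      x ∈ J * Subalgebra.toSubmodule (locAt D K M hM.isPrime)) : x ∈ J := by
  by_contra hxJ
  set I : Ideal D := J.comap (LinearMap.toSpanSingleton D K x)
  have hI : I ≠ ⊤ := fun h => hxJ (by simpa [I] using (h ▸ Submodule.mem_top : (1 : D) ∈ I))
  obtain ⟨M, hM, hIM⟩ := Ideal.exists_le_maximal I hI
  obtain ⟨t, htM, htx⟩ := exists_smul_mem_of_mem_mul_locAt hM.isPrime (hx M hM)
  exact htM (hIM htx)

end Localization

section Submodule

theorem le_mul_toSubmodule (J : Submodule D K) (A : Subalgebra D K) :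
    J ≤ J * Subalgebra.toSubmodule A :=
  le_mul_of_one_le_right'
    (Algebra.toSubmodule_bot (R := D) (A := K) ▸ Subalgebra.toSubmodule.monotone bot_le)

theorem mul_mem_mul_toSubmodule {A : Subalgebra D K} {J : Submodule D K} {a x : K}
    (ha : a ∈ A) (hx : x ∈ J * Subalgebra.toSubmodule A) :
    a * x ∈ J * Subalgebra.toSubmodule A := by
  rw [← (Subalgebra.isIdempotentElem_toSubmodule A).eq, ← mul_assoc, mul_comm a x]
  exact Submodule.mul_mem_mul hx ha

theorem mul_top_of_ne_bot {J : Submodule D K} (hJ : J ≠ ⊥) : J * ⊤ = ⊤ := by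
  obtain ⟨j, hj, hj0⟩ := Submodule.ne_bot_iff J |>.1 hJ
  refine eq_top_iff.2 fun x _ => ?_
  rw [← mul_inv_cancel_left₀ hj0 x]
  exact Submodule.mul_mem_mul hj Submodule.mem_top

theorem mul_toSubmodule_ne_top {B C : Subalgebra D K} {J : Submodule D K} {d : D} (hd : d ≠ 0)
    (hdJ : ∀ x ∈ J, d • x ∈ B) (hCB : C ≤ B) (hB : B ≠ ⊤) :
    J * Subalgebra.toSubmodule C ≠ ⊤ := by
  intro htop
  have hdJC : ∀ z ∈ J * Subalgebra.toSubmodule C, d • z ∈ B := fun z hz =>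
    Submodule.mul_induction_on hz
      (fun m hm n hn => smul_mul_assoc d m n ▸ B.mul_mem (hdJ m hm) (hCB hn))
      fun x y hx hy => smul_add d x y ▸ B.add_mem hx hy
  refine hB (eq_top_iff.2 fun y _ => ?_)
  have hdK := algebraMap_ne_zero (K := K) hd
  have hy := hdJC ((algebraMap D K d)⁻¹ * y) (htop ▸ Submodule.mem_top)
  rwa [Algebra.smul_def, mul_inv_cancel_left₀ hdK] at hy

end Submodule

section Support

theorem top_mem_supp (s : Semistar D K) : ⊤ ∈ supp D K s := by
  have htop : s.toFun (Subalgebra.toSubmodule ⊤) = ⊤ := by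
    rw [Algebra.top_toSubmodule]
    exact top_unique (s.le_star' ⊤)
  refine ⟨⟨∅, Set.empty_subset _, sInf_empty.symm⟩, ?_, 1, one_ne_zero, fun _ _ => Algebra.mem_top⟩
  rw [htop]
  exact fun _ _ _ _ => Submodule.mem_top

theorem isFracOf_toFun_toSubmodule (s : Semistar D K) {A : Subalgebra D K} {J : Submodule D K}
    (hJ0 : J ≠ ⊥) (hJs : s.toFun J = J) (hJ : IsFracOf D K A J) :
    IsFracOf D K A (s.toFun (Subalgebra.toSubmodule A)) := by
  obtain ⟨hJA, d, hd0, hdJ⟩ := hJ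
  obtain ⟨j, hj, hj0⟩ := Submodule.ne_bot_iff J |>.1 hJ0
  refine ⟨fun a ha x hx => s.mul_mem_toFun (fun y hy => A.mul_mem ha hy) hx,
    d * j, mul_ne_zero hd0 hj0, fun x hx => ?_⟩
  have hjx : j * x ∈ J :=
    hJs ▸ s.mul_mem_toFun (fun y hy => mul_comm y j ▸ hJA y hy j hj) hx
  rw [mul_assoc]
  exact hdJ _ hjx

end Support

section FracLocus

/-- Over a Prüfer domain, the maximal ideals `M` at which `J` localizes to a fractional ideal. -/
def fracLocus (J : Submodule D K) : Set (Ideal D) :=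
  {M | ∃ hM : M.IsMaximal, J * Subalgebra.toSubmodule (locAt D K M hM.isPrime) ≠ ⊤}

theorem exists_smul_mem_locAt_of_mem_fracLocus (hPruf : IsPrufer D K) {J : Submodule D K}
    {M : Ideal D} (hM : M ∈ fracLocus J) :
    ∃ d : D, d ≠ 0 ∧ ∀ x ∈ J, d • x ∈ locAt D K M hM.fst.isPrime := by
  obtain ⟨d, hd0, hd⟩ := exists_smul_mem_locAt_of_ne_top hPruf hM.fst.isPrime
    (fun v hv x hx => mul_mem_mul_toSubmodule hv hx) hM.snd
  exact ⟨d, hd0, fun x hx => hd x (le_mul_toSubmodule J _ hx)⟩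

theorem mem_fracLocus_of_dependent (hPruf : IsPrufer D K) {J : Submodule D K} {M N : Ideal D}
    (hM : M ∈ fracLocus J) (hN : N.IsMaximal) (hMN : Dependent D M N) : N ∈ fracLocus J := by
  obtain ⟨P, hP, hP0, hPM, hPN⟩ := hMN
  obtain ⟨d, hd0, hd⟩ := exists_smul_mem_locAt_of_mem_fracLocus hPruf hM
  exact ⟨hN, mul_toSubmodule_ne_top hd0 (fun x hx => locAt_anti hP _ hPM (hd x hx))
    (locAt_anti hP _ hPN) (locAt_ne_top hP hP0)⟩

theorem ne_bot_of_mem_fracLocus {J : Submodule D K} (hJ : J ≠ ⊥) {M : Ideal D}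
    (hM : M ∈ fracLocus J) : M ≠ ⊥ := by
  rintro rfl
  obtain ⟨hM, hne⟩ := hM
  rw [locAt_bot, Algebra.top_toSubmodule] at hne
  exact hne (mul_top_of_ne_bot hJ)

variable (K) in
def fracLocusRing (J : Submodule D K) : Subalgebra D K :=
  sInf {B | ∃ M ∈ fracLocus J, B = TOf D K M}

theorem fracLocusRing_mem_skOver (J : Submodule D K) : fracLocusRing K J ∈ SkOver D K :=
  ⟨_, by rintro _ ⟨M, hM, rfl⟩; exact ⟨M, hM.fst, rfl⟩, rfl⟩

theorem mem_fracLocusRing_iff (hPruf : IsPrufer D K) {J : Submodule D K} (hJ : J ≠ ⊥) {x : K} :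
    x ∈ fracLocusRing K J ↔
      ∀ (M : Ideal D) (hM : M.IsMaximal), M ∈ fracLocus J → x ∈ locAt D K M hM.isPrime := by
  constructor
  · intro hx M hM hMJ
    have hMM : Dependent D M M := ⟨M, hM.isPrime, ne_bot_of_mem_fracLocus hJ hMJ, le_rfl, le_rfl⟩
    exact Algebra.mem_sInf.1 (Algebra.mem_sInf.1 hx _ ⟨M, hMJ, rfl⟩) _ ⟨M, hM, hMM, rfl⟩
  · intro hx
    refine Algebra.mem_sInf.2 ?_
    rintro _ ⟨M, hMJ, rfl⟩
    refine Algebra.mem_sInf.2 ?_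
    rintro _ ⟨N, hN, hMN, rfl⟩
    exact hx N hN (mem_fracLocus_of_dependent hPruf hMJ hN hMN)

theorem isFracOf_fracLocusRing (hPruf : IsPrufer D K) (hsl : IsSemilocal D)
    {J : Submodule D K} (hJ : J ≠ ⊥) : IsFracOf D K (fracLocusRing K J) J := by
  refine ⟨fun a ha x hx => mem_of_forall_mem_mul_locAt fun M hM => ?_, ?_⟩
  · by_cases hMJ : M ∈ fracLocus J
    · exact mul_mem_mul_toSubmodule ((mem_fracLocusRing_iff hPruf hJ).1 ha M hM hMJ)
        (le_mul_toSubmodule J _ hx)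
    · have htop : J * Subalgebra.toSubmodule (locAt D K M hM.isPrime) = ⊤ := by
        by_contra h
        exact hMJ ⟨hM, h⟩
      exact htop ▸ Submodule.mem_top
  · have : Finite (fracLocus J) := (hsl.subset fun M hM => hM.fst).to_subtype
    obtain ⟨d, hd0, hd⟩ := exists_smul_mem_of_finite
      (B := fun M : fracLocus J => locAt D K M.1 M.2.fst.isPrime) (J := (J : Set K))
      fun M => exists_smul_mem_locAt_of_mem_fracLocus hPruf M.2
    refine ⟨algebraMap D K d, algebraMap_ne_zero hd0, fun x hx => ?_⟩
    rw [← Algebra.smul_def]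
    exact (mem_fracLocusRing_iff hPruf hJ).2 fun M _ hMJ => hd ⟨M, hMJ⟩ x hx

end FracLocus

theorem exists_mem_supp_isFracOf_of_toFun_eq (hPruf : IsPrufer D K) (hsl : IsSemilocal D)
    (s : Semistar D K) {J : Submodule D K} (hJ : s.toFun J = J) :
    ∃ A ∈ supp D K s, IsFracOf D K A J := by
  rcases eq_or_ne J ⊥ with rfl | hJ0
  · refine ⟨⊤, top_mem_supp s, fun a _ x hx => ?_, 1, one_ne_zero, fun _ _ => Algebra.mem_top⟩
    rw [(Submodule.mem_bot D).1 hx, mul_zero]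
    exact zero_mem _
  · have hA := isFracOf_fracLocusRing hPruf hsl hJ0
    exact ⟨_, ⟨fracLocusRing_mem_skOver J, isFracOf_toFun_toSubmodule s hJ0 hJ hA⟩, hA⟩

theorem Semistar.toFun_le_of_eqOn_supp (hPruf : IsPrufer D K) (hsl : IsSemilocal D)
    {s t : Semistar D K}
    (h : ∀ A ∈ supp D K s, ∀ I : Submodule D K, IsFracOf D K A I → s.toFun I = t.toFun I)
    (I : Submodule D K) : t.toFun I ≤ s.toFun I := by
  obtain ⟨A, hA, hfrac⟩ := exists_mem_supp_isFracOf_of_toFun_eq hPruf hsl s (s.idem' I)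
  calc t.toFun I ≤ t.toFun (s.toFun I) := t.mono' (s.le_star' I)
    _ = s.toFun (s.toFun I) := (h A hA _ hfrac).symm
    _ = s.toFun I := s.idem' I

end

/-- The map `γ_Δ`, sending a semistar operation with support `Δ` to
the family of its restrictions to the fractional ideals of the members of `Δ`,
is injective. -/
theorem statement2
    (D : Type*) [CommRing D] [IsDomain D]
    (K : Type*) [Field K] [Algebra D K] [IsFractionRing D K]
    (hPruf : IsPrufer D K) (hsl : IsSemilocal D)
    (Δ : Set (Subalgebra D K))
    (s₁ s₂ : Semistar D K) (h₁ : supp D K s₁ = Δ) (h₂ : supp D K s₂ = Δ)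
    (h : ∀ A ∈ Δ, ∀ I : Submodule D K, IsFracOf D K A I → s₁.toFun I = s₂.toFun I) :
    s₁ = s₂ := by
  refine Semistar.ext' (funext fun I => le_antisymm ?_ ?_)
  · exact Semistar.toFun_le_of_eqOn_supp hPruf hsl
      (h₂ ▸ fun A hA J hJ => (h A hA J hJ).symm) I
  · exact Semistar.toFun_le_of_eqOn_supp hPruf hsl (h₁ ▸ h) I

end Paper
end
end

section
/- Let D be a semilocal Prüfer domain with standard decomposition Θ, let Δ ⊆ SkOver(D), let T ∈ Θ and let ⋆ ∈ SStar_Δ(D). Then the map Γ_T(⋆) : Δ(T) → FStar(T), A ↦ λ_{A,T}(⋆|_{Frac(A)}), is order-preserving: if A ⊆ B are in Δ(T), then λ_{A,T}(⋆|_{Frac(A)}) ≤ λ_{B,T}(⋆|_{Frac(B)}). -/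
/- Common background: Prüfer domains, semistar and (fractional) star operations,
standard decomposition, skeleton, supports, `hiSpec`, the rings `Z(P)`,
and the invariants `ω` and `ε`, following Spirito,
"Semistar operations on semilocal Prüfer domains". -/

set_option linter.unusedSectionVars false
set_option maxHeartbeats 1000000

open Pointwise

noncomputable section

namespace Paper

/-! Write `T = TOf M`. It suffices to find `ξ ∈ K` with `ξ⁻¹ ∈ T` and `ξ I ⊆ J`: then
`ξ I^⋆ = (ξ I)^⋆ ⊆ J^⋆`, hence `I^⋆ T = ξ⁻¹ ξ I^⋆ T ⊆ J^⋆ T`.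

Fix `0 ≠ j ∈ J` and `d ≠ 0` with `d I ⊆ A`. In a Prüfer domain dependence is an equivalence
on maximal ideals, and for independent `N`, `N'` the rings `D_N`, `D_N'` generate `K`. Together
with prime avoidance over the finitely many maximal ideals this yields `0 ≠ x ∈ D` outside every
maximal ideal of the class of `M` (so `x⁻¹ ∈ T`) and inside `j d D_N` for every other maximal `N`.
Then `x I ⊆ J` is checked locally: in the class of `M`, `T ⊆ D_N` gives
`x I ⊆ I D_N = J D_N`; elsewhere `x I ⊆ j (d I) D_N ⊆ J D_N`. -/

open Subalgebra

lemma toSubmodule_mul_of_le {R A : Type*} [CommSemiring R] [CommSemiring A] [Algebra R A]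
    {C₁ C₂ : Subalgebra R A} (h : C₁ ≤ C₂) : toSubmodule C₁ * toSubmodule C₂ = toSubmodule C₂ := by
  rw [mul_toSubmodule, sup_eq_right.mpr h]

lemma le_mul_toSubmodule_s3 {R A : Type*} [CommSemiring R] [Semiring A] [Algebra R A]
    (F : Submodule R A) (C : Subalgebra R A) : F ≤ F * toSubmodule C :=
  le_mul_of_one_le_right' (Submodule.one_le.mpr C.one_mem)

lemma Semistar.toFun_mul_le_of_span_mul_le {R K : Type*} [CommRing R] [Field K] [Algebra R K]
    (s : Semistar R K) {T : Subalgebra R K} {ξ : K} (hξ : ξ ≠ 0) (hξT : ξ⁻¹ ∈ T)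
    {I J : Submodule R K} (h : Submodule.span R {ξ} * I ≤ J) :
    s.toFun I * toSubmodule T ≤ s.toFun J * toSubmodule T := by
  have hspan : Submodule.span R {ξ⁻¹} ≤ toSubmodule T :=
    Submodule.span_le.mpr (Set.singleton_subset_iff.mpr hξT)
  calc s.toFun I * toSubmodule T
      = Submodule.span R {ξ⁻¹} * (Submodule.span R {ξ} * s.toFun I) * toSubmodule T := by
        rw [← mul_assoc, Submodule.span_mul_span, Set.singleton_mul_singleton,
          inv_mul_cancel₀ hξ, ← Submodule.one_eq_span, one_mul]
    _ = Submodule.span R {ξ⁻¹} * s.toFun (Submodule.span R {ξ} * I) * toSubmodule T := by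
        rw [s.smul' ξ hξ]
    _ ≤ toSubmodule T * s.toFun J * toSubmodule T := by
        gcongr
        exact s.mono' h
    _ = s.toFun J * toSubmodule T := by
        rw [mul_comm (toSubmodule T), mul_assoc, (isIdempotentElem_toSubmodule T).eq]

section Overrings

variable {D : Type*} [CommRing D] [IsDomain D]
variable {K : Type*} [Field K] [Algebra D K] [IsFractionRing D K]

lemma mem_locAt_iff {P : Ideal D} (hP : P.IsPrime) {x : K} :
    x ∈ locAt D K P hP ↔ ∃ a s : D, s ∉ P ∧ x = algebraMap D K a * (algebraMap D K s)⁻¹ := by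
  constructor <;>
  · rintro ⟨a, s, hs, rfl⟩
    exact ⟨a, s, hs, by rw [IsFractionRing.mk'_eq_div, div_eq_mul_inv]⟩

lemma inv_mem_locAt {P : Ideal D} (hP : P.IsPrime) {s : D} (hs : s ∉ P) :
    (algebraMap D K s)⁻¹ ∈ locAt D K P hP :=
  (mem_locAt_iff hP).mpr ⟨1, s, hs, by rw [map_one, one_mul]⟩

lemma mem_mul_locAt_iff {P : Ideal D} (hP : P.IsPrime) (F : Submodule D K) {x : K} :
    x ∈ F * toSubmodule (locAt D K P hP) ↔ ∃ s : D, s ∉ P ∧ algebraMap D K s * x ∈ F := by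
  constructor
  · intro hx
    refine Submodule.mul_induction_on hx ?_ ?_
    · rintro f hf u hu
      obtain ⟨a, t, ht, rfl⟩ := (mem_locAt_iff hP).mp hu
      have ht0 : algebraMap D K t ≠ 0 := IsFractionRing.to_map_eq_zero_iff.not.mpr
        fun h => ht (h ▸ P.zero_mem)
      refine ⟨t, ht, ?_⟩
      have : algebraMap D K t * (f * (algebraMap D K a * (algebraMap D K t)⁻¹)) = a • f := by
        rw [Algebra.smul_def]; field_simp
      exact this ▸ F.smul_mem a hf
    · rintro x y ⟨s, hs, hsx⟩ ⟨t, ht, hty⟩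
      refine ⟨s * t, fun h => (hP.mem_or_mem h).elim hs ht, ?_⟩
      have : algebraMap D K (s * t) * (x + y)
          = t • (algebraMap D K s * x) + s • (algebraMap D K t * y) := by
        simp only [Algebra.smul_def, map_mul]; ring
      exact this ▸ F.add_mem (F.smul_mem _ hsx) (F.smul_mem _ hty)
  · rintro ⟨s, hs, hsx⟩
    have hs0 : algebraMap D K s ≠ 0 := IsFractionRing.to_map_eq_zero_iff.not.mpr
      fun h => hs (h ▸ P.zero_mem)
    simpa [mul_comm (algebraMap D K s) x, mul_assoc, hs0] using
      Submodule.mul_mem_mul hsx (show _ ∈ toSubmodule (locAt D K P hP) from inv_mem_locAt hP hs)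

lemma le_of_forall_le_mul_locAt {F G : Submodule D K}
    (h : ∀ (N : Ideal D) (hN : N.IsMaximal), F ≤ G * toSubmodule (locAt D K N hN.isPrime)) :
    F ≤ G := by
  intro x hx
  let denominators : Ideal D :=
    { carrier := {d | algebraMap D K d * x ∈ G}
      add_mem' := fun ha hb => by simpa [add_mul] using G.add_mem ha hb
      zero_mem' := by simp
      smul_mem' := fun c d hd => by
        simpa [smul_eq_mul, mul_assoc, Algebra.smul_def] using G.smul_mem c hd }
  by_cases htop : denominators = ⊤
  · have h1 : algebraMap D K 1 * x ∈ G := (htop ▸ Submodule.mem_top : (1 : D) ∈ denominators)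
    simpa using h1
  · obtain ⟨N, hN, hle⟩ := Ideal.exists_le_maximal _ htop
    obtain ⟨s, hs, hsx⟩ := (mem_mul_locAt_iff hN.isPrime G).mp (h N hN hx)
    exact absurd (hle hsx) hs

lemma exists_prime_forall_inv_not_mem {C : Subalgebra D K} (hC : C ≠ ⊤) :
    ∃ P : Ideal D, P.IsPrime ∧ P ≠ ⊥ ∧
      ∀ p ∈ P, p ≠ 0 → (algebraMap D K p)⁻¹ ∉ C := by
  have hb : ∃ b : D, b ≠ 0 ∧ (algebraMap D K b)⁻¹ ∉ C := by
    by_contra! h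
    refine hC (eq_top_iff.mpr fun k _ => ?_)
    obtain ⟨a, b, hb, rfl⟩ := IsFractionRing.div_surjective (A := D) k
    rw [div_eq_mul_inv]
    exact C.mul_mem (C.algebraMap_mem a) (h b (nonZeroDivisors.ne_zero hb))
  obtain ⟨b, hb0, hbC⟩ := hb
  -- `b` is a nonunit of `C`; contract a maximal ideal of `C` containing it
  have hunit : ¬IsUnit (algebraMap D C b) := fun hu => hbC <| by
    have h : ((hu.unit⁻¹ : Cˣ) : K) = (algebraMap D K b)⁻¹ :=
      eq_inv_of_mul_eq_one_left (congrArg Subtype.val hu.val_inv_mul)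
    exact h ▸ (hu.unit⁻¹ : Cˣ).val.2
  obtain ⟨M, hM, hbM⟩ := Ideal.exists_le_maximal _
    (mt Ideal.span_singleton_eq_top.mp hunit)
  refine ⟨M.comap (algebraMap D C), Ideal.IsPrime.comap _, fun hbot => hb0 ?_, ?_⟩
  · exact Ideal.mem_bot.mp (hbot ▸ (hbM (Ideal.subset_span rfl) : b ∈ M.comap (algebraMap D C)))
  · intro p hp hp0 hpC
    refine hM.ne_top (Ideal.eq_top_of_isUnit_mem _ hp (IsUnit.of_mul_eq_one ⟨_, hpC⟩ ?_))
    exact Subtype.ext (mul_inv_cancel₀ (IsFractionRing.to_map_eq_zero_iff.not.mpr hp0))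

lemma le_of_forall_inv_not_mem_locAt {P N : Ideal D} (hN : N.IsPrime)
    (h : ∀ p ∈ P, p ≠ 0 → (algebraMap D K p)⁻¹ ∉ locAt D K N hN) : P ≤ N := by
  intro p hp
  rcases eq_or_ne p 0 with rfl | hp0
  · exact N.zero_mem
  · exact not_not.mp fun hpN => h p hp hp0 (inv_mem_locAt hN hpN)

lemma locAt_sup_locAt_eq_top {N N' : Ideal D} (hN : N.IsPrime) (hN' : N'.IsPrime)
    (h : ¬Dependent D N N') : locAt D K N hN ⊔ locAt D K N' hN' = ⊤ := by
  by_contra hne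
  obtain ⟨P, hP, hP0, hinv⟩ := exists_prime_forall_inv_not_mem hne
  exact h ⟨P, hP, hP0,
    le_of_forall_inv_not_mem_locAt hN fun p hp hp0 hmem =>
      hinv p hp hp0 (Algebra.mem_sup_left hmem),
    le_of_forall_inv_not_mem_locAt hN' fun p hp hp0 hmem =>
      hinv p hp hp0 (Algebra.mem_sup_right hmem)⟩

lemma IsPrufer.le_total_of_le (hPruf : IsPrufer D K) {N P Q : Ideal D} (hN : N.IsPrime)
    (hP : P.IsPrime) (hQ : Q.IsPrime) (hPN : P ≤ N) (hQN : Q ≤ N) : P ≤ Q ∨ Q ≤ P := by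
  -- if `p ∈ P \ Q` and `q ∈ Q \ P`, neither of `p`, `q` divides the other in `D_N`
  suffices key : ∀ {P : Ideal D}, P.IsPrime → P ≤ N → ∀ p ∈ P, ∀ q ∉ P,
      ∀ z : locAt D K N hN, algebraMap D K p * z ≠ algebraMap D K q by
    by_contra! hPQ
    obtain ⟨p, hpP, hpQ⟩ := SetLike.not_le_iff_exists.mp hPQ.1
    obtain ⟨q, hqQ, hqP⟩ := SetLike.not_le_iff_exists.mp hPQ.2
    obtain ⟨z, hz | hz⟩ := hPruf N hN ⟨_, Subalgebra.algebraMap_mem _ p⟩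
      ⟨_, Subalgebra.algebraMap_mem _ q⟩
    exacts [key hP hPN p hpP q hqP z (congrArg Subtype.val hz),
      key hQ hQN q hqQ p hpQ z (congrArg Subtype.val hz)]
  intro P hP hPN p hp q hq z hz
  obtain ⟨a, t, ht, hzat⟩ := (mem_locAt_iff hN).mp z.2
  have ht0 : algebraMap D K t ≠ 0 := IsFractionRing.to_map_eq_zero_iff.not.mpr
    fun h => ht (h ▸ N.zero_mem)
  have hpa : p * a = q * t := IsFractionRing.injective D K <| by
    rw [hzat] at hz
    field_simp at hz
    simp only [map_mul]
    linear_combination hz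
  rcases hP.mem_or_mem (hpa ▸ P.mul_mem_right a hp) with h | h
  exacts [hq h, ht (hPN h)]

lemma IsPrufer.dependent_trans (hPruf : IsPrufer D K) {M N N' : Ideal D} (hN : N.IsPrime)
    (hMN : Dependent D M N) (hNN' : Dependent D N N') : Dependent D M N' := by
  obtain ⟨Q, hQ, hQ0, hQM, hQN⟩ := hMN
  obtain ⟨P, hP, hP0, hPN, hPN'⟩ := hNN'
  rcases hPruf.le_total_of_le hN hP hQ hPN hQN with h | h
  exacts [⟨P, hP, hP0, h.trans hQM, hPN'⟩, ⟨Q, hQ, hQ0, hQM, h.trans hPN'⟩]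

lemma exists_le_of_forall_mem_of_finite {𝓜 : Set (Ideal D)} (hfin : 𝓜.Finite)
    (hprime : ∀ N ∈ 𝓜, N.IsPrime) {L : Ideal D} (hL : L ≠ ⊥)
    (h : ∀ x ∈ L, x ≠ 0 → ∃ N ∈ 𝓜, x ∈ N) : ∃ N ∈ 𝓜, L ≤ N := by
  have hcover : (L : Set D) ⊆ ⋃ N ∈ insert ⊥ 𝓜, (N : Set D) := by
    intro x hx
    rcases eq_or_ne x 0 with rfl | hx0
    · exact Set.mem_biUnion (Set.mem_insert _ _) (⊥ : Ideal D).zero_mem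
    · obtain ⟨N, hN, hxN⟩ := h x hx hx0
      exact Set.mem_biUnion (Set.mem_insert_of_mem _ hN) hxN
  obtain ⟨N, hN, hLN⟩ := (Ideal.subset_union_prime_finite (hfin.insert ⊥) (f := id) ⊥ ⊥
    fun N hN hN0 _ => hprime N ((Set.mem_insert_iff.mp hN).resolve_left hN0)).mp hcover
  rcases Set.mem_insert_iff.mp hN with rfl | hN
  exacts [absurd (le_bot_iff.mp hLN) hL, ⟨N, hN, hLN⟩]

lemma TOf_le_locAt {M N : Ideal D} (hN : N.IsMaximal) (h : Dependent D M N) :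
    TOf D K M ≤ locAt D K N hN.isPrime :=
  sInf_le ⟨N, hN, h, rfl⟩

lemma inv_mem_TOf {M : Ideal D} {x : D} (h : ∀ N, N.IsMaximal → Dependent D M N → x ∉ N) :
    (algebraMap D K x)⁻¹ ∈ TOf D K M := by
  refine Algebra.mem_sInf.mpr ?_
  rintro _ ⟨N, hN, hMN, rfl⟩
  exact inv_mem_locAt _ (h N hN hMN)

lemma exists_not_mem_and_mem_span_mul_locAt {N N' : Ideal D} (hN : N.IsPrime)
    (hN' : N'.IsPrime) (h : ¬Dependent D N N') {c : K} (hc : c ≠ 0) :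
    ∃ s : D, s ∉ N ∧ algebraMap D K s ∈ Submodule.span D {c} * toSubmodule (locAt D K N' hN') := by
  have h1 : (1 : K) ∈
      Submodule.span D {c} * toSubmodule (locAt D K N' hN') * toSubmodule (locAt D K N hN) := by
    rw [mul_assoc, mul_toSubmodule, sup_comm, locAt_sup_locAt_eq_top hN hN' h,
      Algebra.top_toSubmodule]
    exact Submodule.mem_span_singleton_mul.mpr ⟨c⁻¹, trivial, mul_inv_cancel₀ hc⟩
  obtain ⟨s, hs, hsmem⟩ := (mem_mul_locAt_iff hN _).mp h1
  exact ⟨s, hs, by simpa using hsmem⟩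

lemma exists_mem_span_mul_locAt_avoiding (hPruf : IsPrufer D K) (hsl : IsSemilocal D)
    (M : Ideal D) {c : K} (hc : c ≠ 0) :
    ∃ x : D, x ≠ 0 ∧ (∀ N, N.IsMaximal → Dependent D M N → x ∉ N) ∧
      ∀ N (hN : N.IsMaximal), ¬Dependent D M N →
        algebraMap D K x ∈ Submodule.span D {c} * toSubmodule (locAt D K N hN.isPrime) := by
  set 𝓑 := {N : Ideal D | N.IsMaximal ∧ ¬Dependent D M N}
  have : Fintype 𝓑 := (hsl.subset fun _ h => h.1).fintype
  set L : Ideal D := Finset.univ.inf fun N : 𝓑 =>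
    (Submodule.span D {c} * toSubmodule (locAt D K N.1 N.2.1.isPrime)).comap
      (Algebra.linearMap D K)
  have hmemL : ∀ x, x ∈ L ↔ ∀ N : 𝓑,
      algebraMap D K x ∈ Submodule.span D {c} * toSubmodule (locAt D K N.1 N.2.1.isPrime) := by
    simp [L, Submodule.mem_finsetInf]
  have hL0 : L ≠ ⊥ := by
    obtain ⟨α, β, hβ, hαβ⟩ := IsFractionRing.div_surjective (A := D) c
    have hβ0 : algebraMap D K β ≠ 0 := IsFractionRing.to_map_ne_zero_of_mem_nonZeroDivisors hβ
    have hα : algebraMap D K α = c * algebraMap D K β := by rw [← hαβ, div_mul_cancel₀ _ hβ0]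
    refine fun hbot => mul_ne_zero hc hβ0 (hα ▸ ?_)
    have hαL : α ∈ L := (hmemL α).mpr fun N => Submodule.mem_span_singleton_mul.mpr
      ⟨_, Subalgebra.algebraMap_mem _ β, hα.symm⟩
    rw [hbot, Ideal.mem_bot] at hαL
    rw [hαL, map_zero]
  have hLN : ∀ N, N.IsMaximal → Dependent D M N → ¬L ≤ N := by
    intro N hN hMN hLN
    obtain ⟨N', -, hN'N⟩ := hN.isPrime.inf_le'.mp hLN
    obtain ⟨s, hs, hsmem⟩ := exists_not_mem_and_mem_span_mul_locAt hN.isPrime N'.2.1.isPrime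
      (fun h => N'.2.2 (hPruf.dependent_trans hN.isPrime hMN h)) hc
    exact hs (hN'N hsmem)
  obtain ⟨x, hxL, hx0, hx⟩ : ∃ x ∈ L, x ≠ 0 ∧ ∀ N, N.IsMaximal → Dependent D M N → x ∉ N := by
    by_contra! hcover
    obtain ⟨N, ⟨hN, hMN⟩, hLN'⟩ := exists_le_of_forall_mem_of_finite
      (𝓜 := {N | N.IsMaximal ∧ Dependent D M N}) (hsl.subset fun _ h => h.1)
      (fun N h => h.1.isPrime) hL0 fun x hxL hx0 => by simpa [and_assoc] using hcover x hxL hx0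
    exact hLN N hN hMN hLN'
  exact ⟨x, hx0, hx, fun N hN hMN => (hmemL x).mp hxL ⟨N, hN, hMN⟩⟩

lemma exists_span_mul_le_of_mul_TOf_eq (hPruf : IsPrufer D K) (hsl : IsSemilocal D)
    (M : Ideal D) {A B : Subalgebra D K} (hAB : A ≤ B) {I J : Submodule D K}
    (hI : IsFracOf D K A I) (hJ : IsFracOf D K B J)
    (hIJ : I * toSubmodule (TOf D K M) = J * toSubmodule (TOf D K M)) :
    ∃ x : D, x ≠ 0 ∧ (algebraMap D K x)⁻¹ ∈ TOf D K M ∧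
      Submodule.span D {algebraMap D K x} * I ≤ J := by
  have hxI : ∀ x : D, Submodule.span D {algebraMap D K x} * I ≤ I := fun x z hz => by
    obtain ⟨y, hy, rfl⟩ := Submodule.mem_span_singleton_mul.mp hz
    simpa [Algebra.smul_def] using I.smul_mem x hy
  rcases eq_or_ne J ⊥ with rfl | hJ0
  · refine ⟨1, one_ne_zero, by simp [one_mem], (hxI 1).trans ?_⟩
    simpa [hIJ] using le_mul_toSubmodule_s3 I (TOf D K M)
  obtain ⟨j, hjJ, hj0⟩ := Submodule.exists_mem_ne_zero_of_ne_bot hJ0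
  obtain ⟨d, hd0, hdI⟩ := hI.2
  obtain ⟨x, hx0, hxM, hxc⟩ :=
    exists_mem_span_mul_locAt_avoiding hPruf hsl M (mul_ne_zero hj0 hd0)
  refine ⟨x, hx0, inv_mem_TOf hxM, le_of_forall_le_mul_locAt fun N hN => ?_⟩
  by_cases hMN : Dependent D M N
  · calc Submodule.span D {algebraMap D K x} * I
        ≤ I * toSubmodule (locAt D K N hN.isPrime) := (hxI x).trans (le_mul_toSubmodule_s3 _ _)
      _ = J * toSubmodule (locAt D K N hN.isPrime) := by
        rw [← toSubmodule_mul_of_le (TOf_le_locAt hN hMN), ← mul_assoc, hIJ, mul_assoc]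
  · obtain ⟨u, hu, hxu⟩ := Submodule.mem_span_singleton_mul.mp (hxc N hN hMN)
    intro z hz
    obtain ⟨y, hy, rfl⟩ := Submodule.mem_span_singleton_mul.mp hz
    rw [← hxu, show j * d * u * y = d * y * j * u by ring]
    exact Submodule.mul_mem_mul (hJ.1 _ (hAB (hdI y hy)) j hjJ) hu

end Overrings

theorem statement3_general
    (D : Type*) [CommRing D] [IsDomain D]
    (K : Type*) [Field K] [Algebra D K] [IsFractionRing D K]
    (hPruf : IsPrufer D K) (hsl : IsSemilocal D)
    (s : Semistar D K)
    (T : Subalgebra D K) (hT : T ∈ stdDecomp D K)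
    (A B : Subalgebra D K)
    (hAB : A ≤ B)
    (I J : Submodule D K) (hI : IsFracOf D K A I) (hJ : IsFracOf D K B J)
    (hIJ : I * Subalgebra.toSubmodule T = J * Subalgebra.toSubmodule T) :
    s.toFun I * Subalgebra.toSubmodule T ≤ s.toFun J * Subalgebra.toSubmodule T := by
  obtain ⟨M, -, rfl⟩ := hT
  obtain ⟨x, hx0, hxT, hxIJ⟩ := exists_span_mul_le_of_mul_TOf_eq hPruf hsl M hAB hI hJ hIJ
  exact s.toFun_mul_le_of_span_mul_le (IsFractionRing.to_map_eq_zero_iff.not.mpr hx0) hxT hxIJ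

/-- For a semistar operation `⋆` with support `Δ` and `T ∈ Θ`, the map
`Γ_T(⋆) : Δ(T) → FStar(T)`, `A ↦ λ_{A,T}(⋆|_{Frac(A)})`, is order-preserving: if
`A ⊆ B` in `Δ(T)` then `λ_{A,T}(⋆|_{Frac(A)}) ≤ λ_{B,T}(⋆|_{Frac(B)})`, i.e. for every
fractional ideal of `T` written both as `I·T` (`I ∈ Frac(A)`) and as `J·T`
(`J ∈ Frac(B)`), we have `I^⋆·T ⊆ J^⋆·T`. -/
theorem statement3
    (D : Type*) [CommRing D] [IsDomain D]
    (K : Type*) [Field K] [Algebra D K] [IsFractionRing D K]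
    (hPruf : IsPrufer D K) (hsl : IsSemilocal D)
    (Δ : Set (Subalgebra D K)) (s : Semistar D K) (hs : supp D K s = Δ)
    (T : Subalgebra D K) (hT : T ∈ stdDecomp D K)
    (A B : Subalgebra D K) (hA : A ∈ Δ) (hB : B ∈ Δ)
    (hAT : A ≤ T) (hBT : B ≤ T) (hAB : A ≤ B)
    (I J : Submodule D K) (hI : IsFracOf D K A I) (hJ : IsFracOf D K B J)
    (hIJ : I * Subalgebra.toSubmodule T = J * Subalgebra.toSubmodule T) :
    s.toFun I * Subalgebra.toSubmodule T ≤ s.toFun J * Subalgebra.toSubmodule T :=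
  statement3_general D K hPruf hsl s T hT A B hAB I J hI hJ hIJ

end Paper
end
end
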